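/- If every n-point metric space embeds into L¹ with distortion at most K(n), then for all symmetric C,D : {1,…,n}² → [0,∞), the linear programming relaxation value M*(C,D) (minimum of Σ C(i,j)d_{ij} over all semimetrics d with Σ D(i,j)d_{ij} = 1) satisfies Φ*(C,D) ≤ K(n)·M*(C,D) and M*(C,D) ≤ Φ*(C,D). -/

import Mathlib

open MeasureTheory

noncomputable abbrev SpaceL1 := Lp ℝ 1 (volume : Measure ℝ)

/-- Indicator of a cut S ⊆ {1,…,n}. -/
def cutInd {n : ℕ} (S : Finset (Fin n)) (i : Fin n) : ℝ := if i ∈ S then 1 else 0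

open Finset Pointwise

/-!
Normalising the cut semimetric `|1_S(i) - 1_S(j)|` of a proper nonempty cut `S` makes it
feasible for the linear program with objective value the sparsity of `S`, so `M* ≤ Φ*`.
Conversely, embed a feasible semimetric `d` into `L¹` with distortion `K` at scale `s`: the
`D`-weighted sum of the distances becomes at least `s`, the `C`-weighted sum at most
`K s ∑ C d`, so the `L¹` ratio is at most `K ∑ C d`. Since `Φ*` is the infimum of these
ratios, `Φ* ≤ K M*`.
-/

section PairSum

variable {ι : Type*} [Fintype ι]

def pairSum (w x : ι → ι → ℝ) : ℝ := ∑ i, ∑ j, w i j * x i j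

lemma pairSum_nonneg {w x : ι → ι → ℝ} (hw : ∀ i j, 0 ≤ w i j) (hx : ∀ i j, 0 ≤ x i j) :
    0 ≤ pairSum w x :=
  sum_nonneg fun i _ => sum_nonneg fun j _ => mul_nonneg (hw i j) (hx i j)

lemma pairSum_mono {w x y : ι → ι → ℝ} (hw : ∀ i j, 0 ≤ w i j) (hxy : ∀ i j, x i j ≤ y i j) :
    pairSum w x ≤ pairSum w y :=
  sum_le_sum fun i _ => sum_le_sum fun j _ => mul_le_mul_of_nonneg_left (hxy i j) (hw i j)

lemma pairSum_const_mul (w x : ι → ι → ℝ) (c : ℝ) :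
    pairSum w (fun i j => c * x i j) = c * pairSum w x := by
  simp_rw [pairSum, mul_sum, mul_left_comm]

lemma pairSum_div (w x : ι → ι → ℝ) (t : ℝ) :
    pairSum w (fun i j => x i j / t) = pairSum w x / t := by
  simp_rw [div_eq_inv_mul, ← pairSum_const_mul]

end PairSum

section Distortion

variable {ι E : Type*} [Fintype ι] [SeminormedAddCommGroup E]
  {w C D d : ι → ι → ℝ} {f : ι → E} {s K : ℝ}

lemma mul_pairSum_le_pairSum_norm (hw : ∀ i j, 0 ≤ w i j)
    (hf : ∀ i j, s * d i j ≤ ‖f i - f j‖) :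
    s * pairSum w d ≤ pairSum w (fun i j => ‖f i - f j‖) :=
  pairSum_const_mul w d s ▸ pairSum_mono hw hf

lemma pairSum_norm_le_mul_pairSum (hw : ∀ i j, 0 ≤ w i j)
    (hf : ∀ i j, ‖f i - f j‖ ≤ K * s * d i j) :
    pairSum w (fun i j => ‖f i - f j‖) ≤ K * s * pairSum w d :=
  pairSum_const_mul w d (K * s) ▸ pairSum_mono hw hf

lemma one_le_of_distortion (hD : ∀ i j, 0 ≤ D i j) (hDd : pairSum D d = 1) (hs : 0 < s)
    (hf : ∀ i j, s * d i j ≤ ‖f i - f j‖ ∧ ‖f i - f j‖ ≤ K * s * d i j) : 1 ≤ K := by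
  have hlow := mul_pairSum_le_pairSum_norm hD fun i j => (hf i j).1
  have hupp := pairSum_norm_le_mul_pairSum hD fun i j => (hf i j).2
  rw [hDd] at hlow hupp
  nlinarith

lemma ratio_le_of_distortion (hC : ∀ i j, 0 ≤ C i j) (hD : ∀ i j, 0 ≤ D i j)
    (hCd : 0 ≤ pairSum C d) (hDd : pairSum D d = 1) (hs : 0 < s)
    (hf : ∀ i j, s * d i j ≤ ‖f i - f j‖ ∧ ‖f i - f j‖ ≤ K * s * d i j) :
    0 < pairSum D (fun i j => ‖f i - f j‖) ∧
      pairSum C (fun i j => ‖f i - f j‖) / pairSum D (fun i j => ‖f i - f j‖) ≤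
        K * pairSum C d := by
  have hden : s ≤ pairSum D (fun i j => ‖f i - f j‖) := by
    simpa [hDd] using mul_pairSum_le_pairSum_norm hD fun i j => (hf i j).1
  have hnum := pairSum_norm_le_mul_pairSum hC fun i j => (hf i j).2
  have hK := one_le_of_distortion hD hDd hs hf
  refine ⟨hs.trans_le hden, ?_⟩
  calc pairSum C (fun i j => ‖f i - f j‖) / pairSum D (fun i j => ‖f i - f j‖)
      ≤ K * s * pairSum C d / s := div_le_div₀ (by positivity) hnum hs hden
    _ = K * pairSum C d := by field_simp

end Distortion

lemma sInf_le_mul_sInf {B L : Set ℝ} {K : ℝ} (hK : 0 ≤ K) (hB : BddBelow B) (hL : L.Nonempty)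
    (h : ∀ v ∈ L, ∃ r ∈ B, r ≤ K * v) : sInf B ≤ K * sInf L := by
  rw [← smul_eq_mul, ← Real.sInf_smul_of_nonneg hK]
  refine le_csInf (hL.smul_set) ?_
  rintro _ ⟨v, hv, rfl⟩
  obtain ⟨r, hr, hrv⟩ := h v hv
  exact (csInf_le hB hr).trans hrv

section Relaxation

variable {ι : Type*} [Fintype ι]

/-- `M*(C,D)` is `sInf (lpValues C D)`, and `Φ*(C,D)` is `sInf (cutRatios C D)`. -/
def lpValues (C D : ι → ι → ℝ) : Set ℝ :=
  {v | ∃ d : ι → ι → ℝ, (∀ i, d i i = 0) ∧ (∀ i j, d i j = d j i) ∧ (∀ i j, 0 ≤ d i j) ∧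
    (∀ i j k, d i k ≤ d i j + d j k) ∧ pairSum D d = 1 ∧ v = pairSum C d}

def l1Ratios (C D : ι → ι → ℝ) : Set ℝ :=
  {r | ∃ f : ι → SpaceL1, 0 < pairSum D (fun i j => ‖f i - f j‖) ∧
    r = pairSum C (fun i j => ‖f i - f j‖) / pairSum D (fun i j => ‖f i - f j‖)}

def EmbedsIntoL1WithDistortion (ι : Type*) (K : ℝ) : Prop :=
  ∀ d : ι → ι → ℝ, (∀ i, d i i = 0) → (∀ i j, d i j = d j i) → (∀ i j, 0 ≤ d i j) →
    (∀ i j k, d i k ≤ d i j + d j k) →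
    ∃ (f : ι → SpaceL1) (s : ℝ), 0 < s ∧
      ∀ i j, s * d i j ≤ ‖f i - f j‖ ∧ ‖f i - f j‖ ≤ K * s * d i j

variable {C D : ι → ι → ℝ}

lemma lpValues_bddBelow (hC : ∀ i j, 0 ≤ C i j) : BddBelow (lpValues C D) :=
  ⟨0, by rintro _ ⟨d, -, -, hd, -, -, rfl⟩; exact pairSum_nonneg hC hd⟩

lemma l1Ratios_bddBelow (hC : ∀ i j, 0 ≤ C i j) : BddBelow (l1Ratios C D) :=
  ⟨0, by
    rintro _ ⟨f, hden, rfl⟩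
    exact div_nonneg (pairSum_nonneg hC fun i j => norm_nonneg _) hden.le⟩

lemma lpValues_eq_empty [Subsingleton ι] : lpValues C D = ∅ := by
  refine Set.eq_empty_of_forall_notMem ?_
  rintro _ ⟨d, hd0, -, -, -, hDd, -⟩
  have : pairSum D d = 0 :=
    sum_eq_zero fun i _ => sum_eq_zero fun j _ => by rw [Subsingleton.elim j i, hd0, mul_zero]
  simp [this] at hDd

lemma exists_mem_l1Ratios_le {K v : ℝ} (hembed : EmbedsIntoL1WithDistortion ι K)
    (hC : ∀ i j, 0 ≤ C i j) (hD : ∀ i j, 0 ≤ D i j) (hv : v ∈ lpValues C D) :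
    ∃ r ∈ l1Ratios C D, r ≤ K * v := by
  obtain ⟨d, hd0, hdsymm, hdnonneg, hdtri, hDd, rfl⟩ := hv
  obtain ⟨f, s, hs, hf⟩ := hembed d hd0 hdsymm hdnonneg hdtri
  obtain ⟨hden, hratio⟩ := ratio_le_of_distortion hC hD (pairSum_nonneg hC hdnonneg) hDd hs hf
  exact ⟨_, ⟨f, hden, rfl⟩, hratio⟩

lemma one_le_of_embedsIntoL1WithDistortion {K : ℝ} (hembed : EmbedsIntoL1WithDistortion ι K)
    (hD : ∀ i j, 0 ≤ D i j) (hL : (lpValues C D).Nonempty) : 1 ≤ K := by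
  obtain ⟨_, d, hd0, hdsymm, hdnonneg, hdtri, hDd, -⟩ := hL
  obtain ⟨f, s, hs, hf⟩ := hembed d hd0 hdsymm hdnonneg hdtri
  exact one_le_of_distortion hD hDd hs hf

end Relaxation

section Cuts

variable {n : ℕ}

def cutRatios (C D : Fin n → Fin n → ℝ) : Set ℝ :=
  {r | ∃ S : Finset (Fin n), S.Nonempty ∧ S ≠ univ ∧
    r = pairSum C (fun i j => |cutInd S i - cutInd S j|) /
      pairSum D (fun i j => |cutInd S i - cutInd S j|)}

variable {C D : Fin n → Fin n → ℝ}

lemma cutRatios_subset_lpValues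
    (hpos : ∀ S : Finset (Fin n), S.Nonempty → S ≠ univ →
      0 < pairSum D (fun i j => |cutInd S i - cutInd S j|)) :
    cutRatios C D ⊆ lpValues C D := by
  rintro _ ⟨S, hS, hSu, rfl⟩
  have ht := hpos S hS hSu
  set t := pairSum D (fun i j => |cutInd S i - cutInd S j|)
  refine ⟨fun i j => |cutInd S i - cutInd S j| / t, fun i => by simp,
    fun i j => by simp only [abs_sub_comm (cutInd S i)], fun i j => by positivity,
    fun i j k => ?_, ?_, ?_⟩
  · rw [← add_div]
    exact div_le_div_of_nonneg_right (abs_sub_le _ _ _) ht.le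
  · rw [pairSum_div, div_self ht.ne']
  · rw [pairSum_div]

lemma cutRatios_nonempty [Nontrivial (Fin n)] : (cutRatios C D).Nonempty := by
  obtain ⟨i, j, hij⟩ := exists_pair_ne (Fin n)
  refine ⟨_, {i}, singleton_nonempty i, fun h => hij ?_, rfl⟩
  have hj : j ∈ ({i} : Finset (Fin n)) := h ▸ mem_univ j
  exact (mem_singleton.mp hj).symm

end Cuts

theorem stmt6_general (n : ℕ) (K : ℕ → ℝ)
    (hembed : ∀ d : Fin n → Fin n → ℝ,
      (∀ i, d i i = 0) → (∀ i j, d i j = d j i) → (∀ i j, 0 ≤ d i j) →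
      (∀ i j k, d i k ≤ d i j + d j k) →
      ∃ (f : Fin n → SpaceL1) (s : ℝ), 0 < s ∧
        ∀ i j, s * d i j ≤ ‖f i - f j‖ ∧ ‖f i - f j‖ ≤ K n * s * d i j)
    (C D : Fin n → Fin n → ℝ)
    (hC : ∀ i j, 0 ≤ C i j) (hD : ∀ i j, 0 ≤ D i j)
    (hpos : ∀ S : Finset (Fin n), S.Nonempty → S ≠ Finset.univ →
      0 < ∑ i, ∑ j, D i j * |cutInd S i - cutInd S j|)
    (hΦ : sInf {r : ℝ | ∃ S : Finset (Fin n), S.Nonempty ∧ S ≠ Finset.univ ∧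
        r = (∑ i, ∑ j, C i j * |cutInd S i - cutInd S j|) /
            (∑ i, ∑ j, D i j * |cutInd S i - cutInd S j|)} =
      sInf {r : ℝ | ∃ f : Fin n → SpaceL1,
        0 < ∑ i, ∑ j, D i j * ‖f i - f j‖ ∧
        r = (∑ i, ∑ j, C i j * ‖f i - f j‖) /
            (∑ i, ∑ j, D i j * ‖f i - f j‖)}) :
    sInf {r : ℝ | ∃ S : Finset (Fin n), S.Nonempty ∧ S ≠ Finset.univ ∧
        r = (∑ i, ∑ j, C i j * |cutInd S i - cutInd S j|) /
            (∑ i, ∑ j, D i j * |cutInd S i - cutInd S j|)} ≤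
      K n * sInf {v : ℝ | ∃ d : Fin n → Fin n → ℝ,
        (∀ i, d i i = 0) ∧ (∀ i j, d i j = d j i) ∧ (∀ i j, 0 ≤ d i j) ∧
        (∀ i j k, d i k ≤ d i j + d j k) ∧
        (∑ i, ∑ j, D i j * d i j) = 1 ∧ v = ∑ i, ∑ j, C i j * d i j}
    ∧
    sInf {v : ℝ | ∃ d : Fin n → Fin n → ℝ,
        (∀ i, d i i = 0) ∧ (∀ i j, d i j = d j i) ∧ (∀ i j, 0 ≤ d i j) ∧
        (∀ i j k, d i k ≤ d i j + d j k) ∧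
        (∑ i, ∑ j, D i j * d i j) = 1 ∧ v = ∑ i, ∑ j, C i j * d i j} ≤
      sInf {r : ℝ | ∃ S : Finset (Fin n), S.Nonempty ∧ S ≠ Finset.univ ∧
        r = (∑ i, ∑ j, C i j * |cutInd S i - cutInd S j|) /
            (∑ i, ∑ j, D i j * |cutInd S i - cutInd S j|)} := by
  change sInf (cutRatios C D) = sInf (l1Ratios C D) at hΦ
  change sInf (cutRatios C D) ≤ K n * sInf (lpValues C D) ∧
    sInf (lpValues C D) ≤ sInf (cutRatios C D)
  have hsub : cutRatios C D ⊆ lpValues C D := cutRatios_subset_lpValues hpos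
  rcases subsingleton_or_nontrivial (Fin n) with _ | _
  · have hL : lpValues C D = ∅ := lpValues_eq_empty
    have hA : cutRatios C D = ∅ := Set.subset_empty_iff.mp (hL ▸ hsub)
    rw [hL, hA, Real.sInf_empty, mul_zero]
    exact ⟨le_rfl, le_rfl⟩
  · have hA : (cutRatios C D).Nonempty := cutRatios_nonempty
    have hL : (lpValues C D).Nonempty := hA.mono hsub
    have hK : 1 ≤ K n := one_le_of_embedsIntoL1WithDistortion hembed hD hL
    refine ⟨?_, csInf_le_csInf (lpValues_bddBelow hC) hA hsub⟩
    rw [hΦ]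
    exact sInf_le_mul_sInf (zero_le_one.trans hK) (l1Ratios_bddBelow hC) hL
      fun v hv => exists_mem_l1Ratios_le hembed hC hD hv

/-- If every n-point (semi)metric space embeds into L¹ with distortion at most
K(n), then the LP relaxation M*(C,D) satisfies Φ* ≤ K(n)·M* and M* ≤ Φ*. -/
theorem stmt6 (n : ℕ) (K : ℕ → ℝ)
    (hembed : ∀ d : Fin n → Fin n → ℝ,
      (∀ i, d i i = 0) → (∀ i j, d i j = d j i) → (∀ i j, 0 ≤ d i j) →
      (∀ i j k, d i k ≤ d i j + d j k) →
      ∃ (f : Fin n → SpaceL1) (s : ℝ), 0 < s ∧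
        ∀ i j, s * d i j ≤ ‖f i - f j‖ ∧ ‖f i - f j‖ ≤ K n * s * d i j)
    (C D : Fin n → Fin n → ℝ)
    (hCsym : ∀ i j, C i j = C j i) (hDsym : ∀ i j, D i j = D j i)
    (hC : ∀ i j, 0 ≤ C i j) (hD : ∀ i j, 0 ≤ D i j)
    (hpos : ∀ S : Finset (Fin n), S.Nonempty → S ≠ Finset.univ →
      0 < ∑ i, ∑ j, D i j * |cutInd S i - cutInd S j|)
    (hΦ : sInf {r : ℝ | ∃ S : Finset (Fin n), S.Nonempty ∧ S ≠ Finset.univ ∧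
        r = (∑ i, ∑ j, C i j * |cutInd S i - cutInd S j|) /
            (∑ i, ∑ j, D i j * |cutInd S i - cutInd S j|)} =
      sInf {r : ℝ | ∃ f : Fin n → SpaceL1,
        0 < ∑ i, ∑ j, D i j * ‖f i - f j‖ ∧
        r = (∑ i, ∑ j, C i j * ‖f i - f j‖) /
            (∑ i, ∑ j, D i j * ‖f i - f j‖)}) :
    sInf {r : ℝ | ∃ S : Finset (Fin n), S.Nonempty ∧ S ≠ Finset.univ ∧
        r = (∑ i, ∑ j, C i j * |cutInd S i - cutInd S j|) /
            (∑ i, ∑ j, D i j * |cutInd S i - cutInd S j|)} ≤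
      K n * sInf {v : ℝ | ∃ d : Fin n → Fin n → ℝ,
        (∀ i, d i i = 0) ∧ (∀ i j, d i j = d j i) ∧ (∀ i j, 0 ≤ d i j) ∧
        (∀ i j k, d i k ≤ d i j + d j k) ∧
        (∑ i, ∑ j, D i j * d i j) = 1 ∧ v = ∑ i, ∑ j, C i j * d i j}
    ∧
    sInf {v : ℝ | ∃ d : Fin n → Fin n → ℝ,
        (∀ i, d i i = 0) ∧ (∀ i j, d i j = d j i) ∧ (∀ i j, 0 ≤ d i j) ∧
        (∀ i j k, d i k ≤ d i j + d j k) ∧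
        (∑ i, ∑ j, D i j * d i j) = 1 ∧ v = ∑ i, ∑ j, C i j * d i j} ≤
      sInf {r : ℝ | ∃ S : Finset (Fin n), S.Nonempty ∧ S ≠ Finset.univ ∧
        r = (∑ i, ∑ j, C i j * |cutInd S i - cutInd S j|) /
            (∑ i, ∑ j, D i j * |cutInd S i - cutInd S j|)} :=
  stmt6_general n K hembed C D hC hD hpos hΦ
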